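/- arXiv:2405.19650 — 6 statements merged into one kernel-verified Lean document; each statement's English description precedes it below -/
import Mathlib

section
/- If the solution set X* = {x*₁, ..., x*_K} minimizes the Tchebycheff set scalarization g(X) = max_{1≤i≤m} λ_i·(min_{1≤k≤K} f_i(x_k) − z_i) over all K-tuples of points in 𝒳, and X* is the unique minimizer (as a tuple up to the scalarization value), then every solution x*_k in X* is Pareto optimal for the multi-objective problem (f_1, ..., f_m); that is, there is no x ∈ 𝒳 with f_i(x) ≤ f_i(x*_k) for all i and f_j(x) < f_j(x*_k) for some j. -/
/-- The Tchebycheff set scalarization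
`g(X) = max_{1 ≤ i ≤ m} λ_i (min_{1 ≤ k ≤ K} f_i(x_k) − z_i)`. -/
noncomputable def tchSet {α : Type*} {m K : ℕ} [NeZero m] [NeZero K]
    (f : Fin m → α → ℝ) (lam z : Fin m → ℝ) (X : Fin K → α) : ℝ :=
  Finset.univ.sup' Finset.univ_nonempty
    fun i => lam i * (Finset.univ.inf' Finset.univ_nonempty (fun k => f i (X k)) - z i)

theorem tchSet_unique_minimizer_pareto {α : Type*} [Nonempty α] {m K : ℕ} [NeZero m] [NeZero K]
    (f : Fin m → α → ℝ) (lam z : Fin m → ℝ) (hlam : ∀ i, 0 ≤ lam i)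
    (Xs : Fin K → α)
    (hmin : ∀ X : Fin K → α, tchSet f lam z Xs ≤ tchSet f lam z X)
    (huniq : ∀ X : Fin K → α, tchSet f lam z X = tchSet f lam z Xs →
      ∃ σ : Equiv.Perm (Fin K), X = Xs ∘ σ) :
    ∀ k : Fin K, ¬ ∃ x : α, (∀ i, f i x ≤ f i (Xs k)) ∧ ∃ j, f j x < f j (Xs k) := by
  classical
  intro k ⟨x, hle, j, hlt⟩
  set X' : Fin K → α := Function.update Xs k x with hX'
  -- pointwise: f i (X' k') ≤ f i (Xs k')
  have hpt : ∀ i k', f i (X' k') ≤ f i (Xs k') := by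
    intro i k'
    by_cases h : k' = k
    · subst h; simp [hX', hle i]
    · simp [hX', Function.update_of_ne h]
  -- tchSet X' ≤ tchSet Xs
  have hleq : tchSet f lam z X' ≤ tchSet f lam z Xs := by
    apply Finset.sup'_mono_fun
    intro i _
    apply mul_le_mul_of_nonneg_left _ (hlam i)
    apply sub_le_sub_right
    apply Finset.le_inf'
    intro k' _
    exact le_trans (Finset.inf'_le _ (Finset.mem_univ k')) (hpt i k')
  have heq : tchSet f lam z X' = tchSet f lam z Xs := le_antisymm hleq (hmin X')
  obtain ⟨σ, hσ⟩ := huniq X' heq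
  -- multisets equal
  have hM : Multiset.map X' Finset.univ.val = Multiset.map Xs Finset.univ.val := by
    rw [hσ]
    have : Multiset.map σ Finset.univ.val = Finset.univ.val := by
      have := Finset.map_univ_equiv σ
      calc Multiset.map σ Finset.univ.val
          = (Finset.univ.map σ.toEmbedding).val := rfl
        _ = Finset.univ.val := by rw [this]
    calc Multiset.map (Xs ∘ σ) Finset.univ.val
        = Multiset.map Xs (Multiset.map σ Finset.univ.val) := by
          rw [Multiset.map_map]
      _ = Multiset.map Xs Finset.univ.val := by rw [this]
  have hcons : (Finset.univ.val : Multiset (Fin K)) = k ::ₘ Finset.univ.val.erase k :=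
    (Multiset.cons_erase (by simp)).symm
  have hnd : (Finset.univ.val : Multiset (Fin K)).Nodup := Finset.univ.nodup
  have hrest : Multiset.map X' (Finset.univ.val.erase k)
      = Multiset.map Xs (Finset.univ.val.erase k) := by
    apply Multiset.map_congr rfl
    intro a ha
    have : a ≠ k := ((Multiset.Nodup.mem_erase_iff hnd).mp ha).1
    simp [hX', Function.update_of_ne this]
  rw [hcons, Multiset.map_cons, Multiset.map_cons, hrest] at hM
  have hx : x = Xs k := by
    have hk' : X' k = x := by simp [hX']
    have hcount := congrArg (Multiset.count x) hM
    simp [Multiset.count_cons, hk'] at hcount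
    by_contra hne
    simp [hne, Ne.symm hne] at hcount
  rw [hx] at hlt
  exact lt_irrefl _ hlt
end

section
/- If the multi-objective problem admits at least one minimizer of the Tchebycheff set scalarization g(X) = max_{1≤i≤m} λ_i·(min_{1≤k≤K} f_i(x_k) − z_i), and 𝒳 is finite (or the Pareto dominance relation is well-founded), then there exists a minimizing K-tuple X̄* = (x̄₁, ..., x̄_K) such that every x̄_k is Pareto optimal for (f_1, ..., f_m). -/
theorem tchSet_exists_pareto_minimizer {α : Type*} [Fintype α] [Nonempty α]
    {m K : ℕ} [NeZero m] [NeZero K]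
    (f : Fin m → α → ℝ) (lam z : Fin m → ℝ) (hlam : ∀ i, 0 ≤ lam i)
    (hex : ∃ X : Fin K → α, ∀ Y : Fin K → α, tchSet f lam z X ≤ tchSet f lam z Y) :
    ∃ X : Fin K → α, (∀ Y : Fin K → α, tchSet f lam z X ≤ tchSet f lam z Y) ∧
      ∀ k : Fin K, ¬ ∃ y : α, (∀ i, f i y ≤ f i (X k)) ∧ ∃ j, f j y < f j (X k) := by
  obtain ⟨X, hX⟩ := hex
  -- dominance relation
  set r : α → α → Prop := fun y x => (∀ i, f i y ≤ f i x) ∧ ∃ j, f j y < f j x with hr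
  have htrans : Transitive r := by
    rintro a b c ⟨hab, j, hj⟩ ⟨hbc, j', hj'⟩
    exact ⟨fun i => (hab i).trans (hbc i), j, hj.trans_le (hbc j)⟩
  have hirr : ∀ a, ¬ r a a := by
    rintro a ⟨-, j, hj⟩; exact lt_irrefl _ hj
  have hwf : WellFounded r := by
    haveI : IsTrans α r := ⟨htrans⟩
    haveI : IsIrrefl α r := ⟨hirr⟩
    exact Finite.wellFounded_of_trans_of_irrefl r
  -- for each x, find a Pareto point dominating-or-equal
  have key : ∀ x : α, ∃ y : α, (∀ i, f i y ≤ f i x) ∧ ∀ w, ¬ r w y := by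
    intro x
    obtain ⟨y, hy, hmin⟩ := hwf.has_min {y | ∀ i, f i y ≤ f i x} ⟨x, fun i => le_rfl⟩
    refine ⟨y, hy, fun w hw => ?_⟩
    exact hmin w (fun i => (hw.1 i).trans (hy i)) hw
  choose P hP1 hP2 using key
  refine ⟨fun k => P (X k), ?_, fun k ⟨y, hy⟩ => hP2 (X k) y hy⟩
  intro Y
  refine le_trans ?_ (hX Y)
  apply Finset.sup'_mono_fun
  intro i _
  apply mul_le_mul_of_nonneg_left _ (hlam i)
  apply sub_le_sub_right
  exact Finset.le_inf' _ _ fun k _ =>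
    (Finset.inf'_le _ (Finset.mem_univ k)).trans (hP1 (X k) i)
end

section
/- Every solution in a minimizing tuple of the smooth Tchebycheff set scalarization is weakly Pareto optimal: if X* = (x*₁, ..., x*_K) minimizes G(X) = μ·log(∑_{i=1}^m exp(λ_i·(−μ_i·log(∑_{k=1}^K exp(−f_i(x_k)/μ_i)) − z_i)/μ)) over 𝒳^K, then for each k there is no x ∈ 𝒳 with f_i(x) < f_i(x*_k) for all i = 1, ..., m. -/
/-- The inner smooth minimum `s_i(X) = −μ_i log (∑_{k=1}^K exp(−f_i(x_k)/μ_i))`. -/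
noncomputable def sminObj {α : Type*} {m K : ℕ}
    (f : Fin m → α → ℝ) (μs : Fin m → ℝ) (X : Fin K → α) (i : Fin m) : ℝ :=
  -μs i * Real.log (∑ k, Real.exp (-f i (X k) / μs i))

/-- The smooth Tchebycheff set scalarization
`G(X) = μ log (∑_{i=1}^m exp(λ_i (s_i(X) − z_i)/μ))`. -/
noncomputable def stchSet {α : Type*} {m K : ℕ}
    (f : Fin m → α → ℝ) (lam z : Fin m → ℝ) (μ : ℝ) (μs : Fin m → ℝ) (X : Fin K → α) : ℝ :=
  μ * Real.log (∑ i, Real.exp (lam i * (sminObj f μs X i - z i) / μ))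

theorem stchSet_minimizer_weakly_pareto {α : Type*} [Nonempty α] {m K : ℕ}
    (f : Fin m → α → ℝ) (lam z : Fin m → ℝ)
    (hlam : ∀ i, 0 ≤ lam i) (hlam' : ∃ i, 0 < lam i)
    (μ : ℝ) (hμ : 0 < μ) (μs : Fin m → ℝ) (hμs : ∀ i, 0 < μs i)
    (Xs : Fin K → α)
    (hmin : ∀ X : Fin K → α, stchSet f lam z μ μs Xs ≤ stchSet f lam z μ μs X) :
    ∀ k : Fin K, ¬ ∃ x : α, ∀ i, f i x < f i (Xs k) := by
  intro k ⟨x, hx⟩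
  set X' := Function.update Xs k x with hX'
  -- inner sums
  have hsum_lt : ∀ i, (∑ k', Real.exp (-f i (Xs k') / μs i))
      < ∑ k', Real.exp (-f i (X' k') / μs i) := by
    intro i
    apply Finset.sum_lt_sum
    · intro j _
      by_cases hj : j = k
      · subst hj
        simp only [hX', Function.update_self]
        exact Real.exp_le_exp.2 (div_le_div_of_nonneg_right
          (neg_le_neg (hx i).le) (hμs i).le)
      · simp [hX', Function.update_of_ne hj]
    · refine ⟨k, Finset.mem_univ k, ?_⟩
      simp only [hX', Function.update_self]
      exact Real.exp_lt_exp.2 (div_lt_div_of_pos_right (neg_lt_neg (hx i)) (hμs i))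
  have hpos : ∀ i, (0:ℝ) < ∑ k', Real.exp (-f i (Xs k') / μs i) := by
    intro i
    exact Finset.sum_pos (fun j _ => Real.exp_pos _) ⟨k, Finset.mem_univ k⟩
  have hs_lt : ∀ i, sminObj f μs X' i < sminObj f μs Xs i := by
    intro i
    unfold sminObj
    have hlog : Real.log (∑ k', Real.exp (-f i (Xs k') / μs i))
        < Real.log (∑ k', Real.exp (-f i (X' k') / μs i)) :=
      Real.log_lt_log (hpos i) (hsum_lt i)
    nlinarith [hμs i]
  -- outer sums
  obtain ⟨i0, hi0⟩ := hlam'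
  have houter : (∑ i, Real.exp (lam i * (sminObj f μs X' i - z i) / μ))
      < ∑ i, Real.exp (lam i * (sminObj f μs Xs i - z i) / μ) := by
    apply Finset.sum_lt_sum
    · intro i _
      apply Real.exp_le_exp.2
      apply div_le_div_of_nonneg_right _ hμ.le
      apply mul_le_mul_of_nonneg_left (by linarith [hs_lt i]) (hlam i)
    · refine ⟨i0, Finset.mem_univ i0, ?_⟩
      apply Real.exp_lt_exp.2
      apply div_lt_div_of_pos_right _ hμ
      exact mul_lt_mul_of_pos_left (by linarith [hs_lt i0]) hi0
  have houterpos : (0:ℝ) < ∑ i, Real.exp (lam i * (sminObj f μs X' i - z i) / μ) :=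
    Finset.sum_pos (fun j _ => Real.exp_pos _) ⟨i0, Finset.mem_univ i0⟩
  have : stchSet f lam z μ μs X' < stchSet f lam z μ μs Xs := by
    unfold stchSet
    exact mul_lt_mul_of_pos_left (Real.log_lt_log houterpos houter) hμ
  exact absurd (hmin X') (not_le.2 this)
end

section
/- If all preference weights are strictly positive, every solution in a minimizing tuple of the smooth Tchebycheff set scalarization is Pareto optimal: if λ_i > 0 for all i and X* = (x*₁, ..., x*_K) minimizes G over 𝒳^K, then for each k there is no x ∈ 𝒳 with f_i(x) ≤ f_i(x*_k) for all i and f_j(x) < f_j(x*_k) for some j. -/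
theorem stchSet_minimizer_pareto {α : Type*} [Nonempty α] {m K : ℕ}
    (f : Fin m → α → ℝ) (lam z : Fin m → ℝ) (hlam : ∀ i, 0 < lam i)
    (μ : ℝ) (hμ : 0 < μ) (μs : Fin m → ℝ) (hμs : ∀ i, 0 < μs i)
    (Xs : Fin K → α)
    (hmin : ∀ X : Fin K → α, stchSet f lam z μ μs Xs ≤ stchSet f lam z μ μs X) :
    ∀ k : Fin K, ¬ ∃ x : α, (∀ i, f i x ≤ f i (Xs k)) ∧ ∃ j, f j x < f j (Xs k) := by
  intro k
  rintro ⟨x, hle, j, hlt⟩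
  set X' := Function.update Xs k x with hX'
  have hKpos : (Finset.univ : Finset (Fin K)).Nonempty := ⟨k, Finset.mem_univ k⟩
  have hsumpos : ∀ (X : Fin K → α) i, 0 < ∑ k', Real.exp (-f i (X k') / μs i) := by
    intro X i
    exact Finset.sum_pos (fun k' _ => Real.exp_pos _) hKpos
  have hterm : ∀ i k', Real.exp (-f i (Xs k') / μs i) ≤ Real.exp (-f i (X' k') / μs i) := by
    intro i k'
    by_cases h : k' = k
    · subst h
      simp only [hX', Function.update_self]
      gcongr <;> first
        | exact (hμs i).le
        | linarith [hle i]
    · simp [hX', Function.update_of_ne h]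
  have hsum : ∀ i, (∑ k', Real.exp (-f i (Xs k') / μs i)) ≤ ∑ k', Real.exp (-f i (X' k') / μs i) :=
    fun i => Finset.sum_le_sum (fun k' _ => hterm i k')
  have hsumj : (∑ k', Real.exp (-f j (Xs k') / μs j)) < ∑ k', Real.exp (-f j (X' k') / μs j) := by
    apply Finset.sum_lt_sum (fun k' _ => hterm j k') ⟨k, Finset.mem_univ k, ?_⟩
    simp only [hX', Function.update_self]
    have h1 : -f j (Xs k) < -f j x := by linarith
    exact Real.exp_lt_exp.2 (div_lt_div_of_pos_right h1 (hμs j))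
  -- smin comparison
  have hs : ∀ i, sminObj f μs X' i ≤ sminObj f μs Xs i := by
    intro i
    unfold sminObj
    have hlog : Real.log (∑ k', Real.exp (-f i (Xs k') / μs i))
        ≤ Real.log (∑ k', Real.exp (-f i (X' k') / μs i)) :=
      Real.log_le_log (hsumpos Xs i) (hsum i)
    nlinarith [hμs i]
  have hsj : sminObj f μs X' j < sminObj f μs Xs j := by
    unfold sminObj
    have hlog : Real.log (∑ k', Real.exp (-f j (Xs k') / μs j))
        < Real.log (∑ k', Real.exp (-f j (X' k') / μs j)) :=
      Real.log_lt_log (hsumpos Xs j) hsumj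
    nlinarith [hμs j]
  -- outer terms
  have houter : ∀ i, Real.exp (lam i * (sminObj f μs X' i - z i) / μ)
      ≤ Real.exp (lam i * (sminObj f μs Xs i - z i) / μ) := by
    intro i
    apply Real.exp_le_exp.2
    have h1 : sminObj f μs X' i - z i ≤ sminObj f μs Xs i - z i := by linarith [hs i]
    gcongr
    · exact (hlam i).le
  have houterj : Real.exp (lam j * (sminObj f μs X' j - z j) / μ)
      < Real.exp (lam j * (sminObj f μs Xs j - z j) / μ) := by
    apply Real.exp_lt_exp.2
    apply div_lt_div_of_pos_right ?_ hμ
    have h1 : sminObj f μs X' j - z j < sminObj f μs Xs j - z j := by linarith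
    exact (mul_lt_mul_iff_right₀ (hlam j)).2 h1
  have hm : (Finset.univ : Finset (Fin m)).Nonempty := ⟨j, Finset.mem_univ j⟩
  have hsumlt : (∑ i, Real.exp (lam i * (sminObj f μs X' i - z i) / μ))
      < ∑ i, Real.exp (lam i * (sminObj f μs Xs i - z i) / μ) :=
    Finset.sum_lt_sum (fun i _ => houter i) ⟨j, Finset.mem_univ j, houterj⟩
  have hpos : 0 < ∑ i, Real.exp (lam i * (sminObj f μs X' i - z i) / μ) :=
    Finset.sum_pos (fun i _ => Real.exp_pos _) hm
  have hG : stchSet f lam z μ μs X' < stchSet f lam z μ μs Xs := by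
    unfold stchSet
    have := Real.log_lt_log hpos hsumlt
    nlinarith
  exact absurd (hmin X') (not_le.2 hG)
end

section
/- The smooth Tchebycheff set scalarization uniformly approximates the Tchebycheff set scalarization: for any tuple X = (x_1, ..., x_K), the value g(X) = max_i λ_i·(min_k f_i(x_k) − z_i) satisfies G_{μ,μ₁,...,μ_m}(X) − μ·log m ≤ g(X) ≤ G'(X), where G is the smooth scalarization and G' is the smooth scalarization with each inner smooth minimum shifted up by μ_i·log K. In particular, |G_{μ,...}(X) − g(X)| → 0 as μ → 0⁺ and μ_i → 0⁺ for all i, with the bound μ·log m + (max_i λ_i μ_i)·log K. -/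
private lemma le_lse {n : ℕ} (a : Fin n → ℝ) {μ : ℝ} (hμ : 0 < μ) (j : Fin n) :
    a j ≤ μ * Real.log (∑ i, Real.exp (a i / μ)) := by
  have h1 : Real.exp (a j / μ) ≤ ∑ i, Real.exp (a i / μ) :=
    Finset.single_le_sum (f := fun i => Real.exp (a i / μ)) (fun i _ => (Real.exp_pos _).le) (Finset.mem_univ j)
  have h2 : a j / μ ≤ Real.log (∑ i, Real.exp (a i / μ)) := by
    have := Real.log_le_log (Real.exp_pos _) h1
    rwa [Real.log_exp] at this
  have := mul_le_mul_of_nonneg_left h2 hμ.le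
  calc a j = μ * (a j / μ) := by field_simp
  _ ≤ _ := this

private lemma lse_le {n : ℕ} [NeZero n] (a : Fin n → ℝ) {μ : ℝ} (hμ : 0 < μ) {B : ℝ}
    (h : ∀ i, a i ≤ B) :
    μ * Real.log (∑ i, Real.exp (a i / μ)) ≤ B + μ * Real.log n := by
  have hn : (0:ℝ) < n := by
    exact_mod_cast Nat.pos_of_ne_zero (NeZero.ne n)
  have hpos : (0:ℝ) < ∑ i, Real.exp (a i / μ) :=
    Finset.sum_pos (fun i _ => Real.exp_pos _) Finset.univ_nonempty
  have h1 : ∑ i, Real.exp (a i / μ) ≤ (n : ℝ) * Real.exp (B / μ) := by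
    calc ∑ i, Real.exp (a i / μ) ≤ ∑ _i : Fin n, Real.exp (B / μ) := by
          apply Finset.sum_le_sum
          intro i _
          exact Real.exp_le_exp.2 (div_le_div_of_nonneg_right (h i) hμ.le)
    _ = (n : ℝ) * Real.exp (B / μ) := by
          simp [Finset.sum_const, Finset.card_univ]
  have h2 : Real.log (∑ i, Real.exp (a i / μ)) ≤ Real.log n + B / μ := by
    have := Real.log_le_log hpos h1
    rwa [Real.log_mul (ne_of_gt hn) (Real.exp_ne_zero _), Real.log_exp] at this
  have := mul_le_mul_of_nonneg_left h2 hμ.le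
  calc μ * Real.log (∑ i, Real.exp (a i / μ)) ≤ μ * (Real.log n + B / μ) := this
  _ = B + μ * Real.log n := by field_simp; ring

private lemma smin_le {α : Type*} {m K : ℕ} [NeZero K]
    (f : Fin m → α → ℝ) (μs : Fin m → ℝ) (hμs : ∀ i, 0 < μs i) (X : Fin K → α) (i : Fin m) :
    sminObj f μs X i ≤ Finset.univ.inf' Finset.univ_nonempty (fun k => f i (X k)) := by
  obtain ⟨k0, _, hk0⟩ := Finset.exists_mem_eq_inf' (Finset.univ_nonempty)
    (fun k => f i (X k))
  rw [hk0]
  have h := le_lse (fun k => -f i (X k)) (hμs i) k0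
  unfold sminObj
  nlinarith [h]

private lemma le_smin {α : Type*} {m K : ℕ} [NeZero K]
    (f : Fin m → α → ℝ) (μs : Fin m → ℝ) (hμs : ∀ i, 0 < μs i) (X : Fin K → α) (i : Fin m) :
    Finset.univ.inf' Finset.univ_nonempty (fun k => f i (X k)) - μs i * Real.log K
      ≤ sminObj f μs X i := by
  have h : ∀ k, -f i (X k) ≤ -(Finset.univ.inf' Finset.univ_nonempty (fun k => f i (X k))) := by
    intro k
    have := Finset.inf'_le (fun k => f i (X k)) (Finset.mem_univ k)
    linarith
  have h2 := lse_le (fun k => -f i (X k)) (hμs i) h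
  unfold sminObj
  nlinarith [h2]

theorem stchSet_uniform_approx {α : Type*} {m K : ℕ} [NeZero m] [NeZero K]
    (f : Fin m → α → ℝ) (lam z : Fin m → ℝ) (hlam : ∀ i, 0 ≤ lam i)
    (μ : ℝ) (hμ : 0 < μ) (μs : Fin m → ℝ) (hμs : ∀ i, 0 < μs i)
    (X : Fin K → α) :
    (stchSet f lam z μ μs X - μ * Real.log m ≤ tchSet f lam z X) ∧
    (tchSet f lam z X ≤
      μ * Real.log (∑ i, Real.exp
        (lam i * (sminObj f μs X i + μs i * Real.log K - z i) / μ))) ∧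
    |stchSet f lam z μ μs X - tchSet f lam z X| ≤
      μ * Real.log m +
        (Finset.univ.sup' Finset.univ_nonempty fun i => lam i * μs i) * Real.log K := by
  set g := tchSet f lam z X with hg
  set a : Fin m → ℝ := fun i => lam i * (sminObj f μs X i - z i) with ha
  set b : Fin m → ℝ := fun i => lam i * (sminObj f μs X i + μs i * Real.log K - z i) with hb
  set M : ℝ := Finset.univ.sup' Finset.univ_nonempty fun i => lam i * μs i with hM
  have hK1 : (1:ℝ) ≤ K := by
    exact_mod_cast Nat.one_le_iff_ne_zero.2 (NeZero.ne K)
  have hm1 : (1:ℝ) ≤ m := by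
    exact_mod_cast Nat.one_le_iff_ne_zero.2 (NeZero.ne m)
  have hlogK : 0 ≤ Real.log K := Real.log_nonneg hK1
  have hlogm : 0 ≤ Real.log m := Real.log_nonneg hm1
  have hM0 : 0 ≤ M := by
    refine le_trans ?_ (Finset.le_sup' (fun i => lam i * μs i)
      (Finset.mem_univ (Classical.arbitrary (Fin m))))
    exact mul_nonneg (hlam _) (hμs _).le
  -- each a i ≤ g
  have hag : ∀ i, a i ≤ g := by
    intro i
    have h1 : a i ≤ lam i * (Finset.univ.inf' Finset.univ_nonempty (fun k => f i (X k)) - z i) := by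
      have := smin_le f μs hμs X i
      have := hlam i
      simp only [ha]
      nlinarith
    exact h1.trans (Finset.le_sup' (fun i => lam i * (Finset.univ.inf' Finset.univ_nonempty (fun k => f i (X k)) - z i)) (Finset.mem_univ i))
  -- Part 1
  have part1 : stchSet f lam z μ μs X - μ * Real.log m ≤ g := by
    have := lse_le a hμ hag
    have hdef : stchSet f lam z μ μs X = μ * Real.log (∑ i, Real.exp (a i / μ)) := rfl
    rw [hdef]
    linarith
  -- Part 2
  have part2 : g ≤ μ * Real.log (∑ i, Real.exp (b i / μ)) := by
    rw [hg]
    apply Finset.sup'_le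
    intro i _
    have h1 : lam i * (Finset.univ.inf' Finset.univ_nonempty (fun k => f i (X k)) - z i) ≤ b i := by
      have := le_smin f μs hμs X i
      have := hlam i
      simp only [hb]
      nlinarith
    exact h1.trans (le_lse b hμ i)
  -- intermediate: μ log Σ exp(b/μ) ≤ M * log K + stch
  have hmid : μ * Real.log (∑ i, Real.exp (b i / μ)) ≤ M * Real.log K + stchSet f lam z μ μs X := by
    have hsum : ∑ i, Real.exp (b i / μ) ≤ (∑ i, Real.exp (a i / μ)) * Real.exp (M * Real.log K / μ) := by
      rw [Finset.sum_mul]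
      apply Finset.sum_le_sum
      intro i _
      rw [← Real.exp_add]
      apply Real.exp_le_exp.2
      have hb_le : b i ≤ a i + M * Real.log K := by
        have hMi : lam i * μs i ≤ M := Finset.le_sup' (fun i => lam i * μs i) (Finset.mem_univ i)
        simp only [ha, hb]
        nlinarith
      have := div_le_div_of_nonneg_right hb_le hμ.le
      rw [add_div] at this
      exact this
    have hpos : (0:ℝ) < ∑ i, Real.exp (b i / μ) :=
      Finset.sum_pos (fun i _ => Real.exp_pos _) Finset.univ_nonempty
    have hpos2 : (0:ℝ) < ∑ i, Real.exp (a i / μ) :=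
      Finset.sum_pos (fun i _ => Real.exp_pos _) Finset.univ_nonempty
    have hlog := Real.log_le_log hpos hsum
    rw [Real.log_mul (ne_of_gt hpos2) (Real.exp_ne_zero _), Real.log_exp] at hlog
    have := mul_le_mul_of_nonneg_left hlog hμ.le
    have hdef : stchSet f lam z μ μs X = μ * Real.log (∑ i, Real.exp (a i / μ)) := rfl
    rw [hdef]
    have : μ * (Real.log (∑ i, Real.exp (a i / μ)) + M * Real.log K / μ)
        = μ * Real.log (∑ i, Real.exp (a i / μ)) + M * Real.log K := by
      field_simp
    nlinarith [mul_le_mul_of_nonneg_left hlog hμ.le]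
  refine ⟨part1, part2, ?_⟩
  rw [abs_le]
  constructor
  · have := part2.trans hmid
    nlinarith [mul_nonneg hμ.le hlogm]
  · nlinarith [mul_nonneg hM0 hlogK]
end

section
/- If the gradient of the smooth Tchebycheff set scalarization with respect to solution x_k vanishes and at least one λ_i is strictly positive, then x_k is Pareto stationary: there exist coefficients α_1, ..., α_m ≥ 0 with ∑_i α_i = 1 and ∑_{i=1}^m α_i ∇f_i(x_k) = 0. -/
set_option maxHeartbeats 1000000 in
theorem stchSet_stationary_implies_pareto_stationary {n m K : ℕ}
    (f : Fin m → EuclideanSpace ℝ (Fin n) → ℝ) (hf : ∀ i, Differentiable ℝ (f i))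
    (lam z : Fin m → ℝ) (hlam : ∀ i, 0 ≤ lam i) (hlam' : ∃ i, 0 < lam i)
    (μ : ℝ) (hμ : 0 < μ) (μs : Fin m → ℝ) (hμs : ∀ i, 0 < μs i)
    (X : Fin K → EuclideanSpace ℝ (Fin n)) (k : Fin K)
    (hgrad : gradient (fun x => stchSet f lam z μ μs (Function.update X k x)) (X k) = 0) :
    ∃ a : Fin m → ℝ, (∀ i, 0 ≤ a i) ∧ (∑ i, a i) = 1 ∧
      ∑ i, a i • gradient (f i) (X k) = 0 := by
  classical
  set x0 := X k with hx0
  set D : Fin m → (EuclideanSpace ℝ (Fin n) →L[ℝ] ℝ) := fun i => fderiv ℝ (f i) x0 with hD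
  set C : Fin m → ℝ := fun i => ∑ j ∈ Finset.univ.erase k, Real.exp (-f i (X j) / μs i) with hC
  set E : Fin m → ℝ := fun i => Real.exp ((μs i)⁻¹ * -f i x0) with hE
  set S : Fin m → ℝ := fun i => E i + C i with hS
  have hSpos : ∀ i, 0 < S i := fun i =>
    add_pos_of_pos_of_nonneg (Real.exp_pos _) (Finset.sum_nonneg fun j _ => (Real.exp_pos _).le)
  set w : Fin m → ℝ := fun i => Real.exp (lam i / μ * (-μs i * Real.log (S i) - z i)) with hw
  set T : ℝ := ∑ i, w i with hT
  obtain ⟨i0, hi0⟩ := hlam'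
  have hTpos : 0 < T :=
    Finset.sum_pos (fun i _ => Real.exp_pos _) ⟨i0, Finset.mem_univ i0⟩
  set c : Fin m → ℝ := fun i => T⁻¹ * w i * lam i * E i / S i with hc
  have hcnonneg : ∀ i, 0 ≤ c i := fun i =>
    div_nonneg (mul_nonneg (mul_nonneg (mul_nonneg (inv_nonneg.mpr hTpos.le)
      (Real.exp_pos _).le) (hlam i)) (Real.exp_pos _).le) (hSpos i).le
  have hc0 : 0 < c i0 := by
    apply div_pos _ (hSpos i0)
    exact mul_pos (mul_pos (mul_pos (inv_pos.mpr hTpos) (Real.exp_pos _)) hi0)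
      (Real.exp_pos _)
  -- the function rewritten
  have hA : (fun x => stchSet f lam z μ μs (Function.update X k x)) =
      fun x => μ * Real.log (∑ i, Real.exp (lam i / μ *
        (-μs i * Real.log (Real.exp ((μs i)⁻¹ * -f i x) + C i) - z i))) := by
    funext x
    unfold stchSet sminObj
    congr 1
    congr 1
    apply Finset.sum_congr rfl
    intro i _
    have hsum : (∑ j, Real.exp (-f i (Function.update X k x j) / μs i)) =
        Real.exp ((μs i)⁻¹ * -f i x) + C i := by
      rw [← Finset.add_sum_erase _ _ (Finset.mem_univ k)]
      congr 1
      · rw [Function.update_self]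
        congr 1
        ring
      · apply Finset.sum_congr rfl
        intro j hj
        rw [Function.update_of_ne (Finset.mem_erase.mp hj).1]
    rw [hsum]
    ring
  -- derivative computation
  have hderiv : ∀ i, HasFDerivAt (fun x => Real.exp (lam i / μ *
      (-μs i * Real.log (Real.exp ((μs i)⁻¹ * -f i x) + C i) - z i)))
      (w i • ((lam i / μ) • ((-μs i) • ((S i)⁻¹ • (E i • ((μs i)⁻¹ • (-D i))))))) x0 := by
    intro i
    have h1 : HasFDerivAt (f i) (D i) x0 := (hf i x0).hasFDerivAt
    have h2 := (h1.neg.const_mul ((μs i)⁻¹)).exp.add_const (C i)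
    have h3 := (h2.log (hSpos i).ne').const_mul (-μs i)
    exact ((h3.sub_const (z i)).const_mul (lam i / μ)).exp
  have hsum := HasFDerivAt.fun_sum (fun i (_ : i ∈ Finset.univ) => hderiv i)
  have hfinal := (hsum.log hTpos.ne').const_mul μ
  have hEq : (μ • T⁻¹ • ∑ i, w i • ((lam i / μ) • ((-μs i) • ((S i)⁻¹ •
      (E i • ((μs i)⁻¹ • (-D i))))))) = ∑ i, c i • D i := by
    rw [smul_smul, Finset.smul_sum]
    apply Finset.sum_congr rfl
    intro i _
    simp only [smul_smul]
    rw [smul_neg, ← neg_smul]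
    congr 1
    simp only [hc]
    have h1 : μ * μ⁻¹ = 1 := mul_inv_cancel₀ hμ.ne'
    have h2 : μs i * (μs i)⁻¹ = 1 := mul_inv_cancel₀ (hμs i).ne'
    linear_combination (μs i * (μs i)⁻¹ * (T⁻¹ * w i * lam i * E i * (S i)⁻¹)) * h1 +
      (T⁻¹ * w i * lam i * E i * (S i)⁻¹) * h2
  have hfinal' : HasFDerivAt (fun x => stchSet f lam z μ μs (Function.update X k x))
      (∑ i, c i • D i) x0 := by
    rw [hA, ← hEq]
    exact hfinal
  have hzero : (∑ i, c i • D i) = 0 := by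
    have hdiff : DifferentiableAt ℝ
        (fun x => stchSet f lam z μ μs (Function.update X k x)) x0 :=
      hfinal'.differentiableAt
    have hg := hdiff.hasGradientAt
    rw [hgrad] at hg
    have := hg.hasFDerivAt
    have h0 := hfinal'.unique this
    simpa using h0
  set ctot : ℝ := ∑ i, c i with hctot
  have hctotpos : 0 < ctot :=
    Finset.sum_pos' (fun i _ => hcnonneg i) ⟨i0, Finset.mem_univ i0, hc0⟩
  refine ⟨fun i => c i / ctot, fun i => div_nonneg (hcnonneg i) hctotpos.le, ?_, ?_⟩
  · rw [← Finset.sum_div, div_self hctotpos.ne']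
  · have hgradf : ∀ i, gradient (f i) x0 =
        (InnerProductSpace.toDual ℝ (EuclideanSpace ℝ (Fin n))).symm (D i) := fun i => rfl
    calc ∑ i, (c i / ctot) • gradient (f i) x0
        = (InnerProductSpace.toDual ℝ (EuclideanSpace ℝ (Fin n))).symm
            (∑ i, (c i / ctot) • D i) := by
          rw [map_sum]
          exact Finset.sum_congr rfl fun i _ => by rw [hgradf i, ← map_smul]
      _ = (InnerProductSpace.toDual ℝ (EuclideanSpace ℝ (Fin n))).symm
            (ctot⁻¹ • ∑ i, c i • D i) := by
          rw [Finset.smul_sum]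
          congr 1
          exact Finset.sum_congr rfl fun i _ => by
            rw [smul_smul, div_eq_inv_mul]
      _ = 0 := by rw [hzero, smul_zero, map_zero]
end
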